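/- Let G = (V, E_1, …, E_N) be an infinite, locally finite, connected edge-coloured graph with N colours, and fix p ∈ [0,1]^{N−1} and q ∈ [0,1]. Let x ∈ V, let S ⊆ V be finite with x ∈ S, and let A ⊆ V be finite. Then Σ_{u∈A} P_{p,q}(x ↔_A u) ≤ |S| + ψ_{p,q}(x,S) · χ(A), where χ(A) := sup_{w∈V} Σ_{v∈A} P_{p,q}(w ↔_A v). -/

import Mathlib

open MeasureTheory ENNReal Set
open scoped Classical

namespace InhomPerc

variable {V : Type*} {N : ℕ}

/-- The edge set of an edge-coloured graph: the union of all colour classes. -/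
def Eset (E : Fin N → Set (Sym2 V)) : Set (Sym2 V) := ⋃ i, E i

/-- The colour classes are mutually disjoint. -/
def DisjointColours (E : Fin N → Set (Sym2 V)) : Prop :=
  ∀ i j : Fin N, i ≠ j → Disjoint (E i) (E j)

/-- Every edge is a pair of two *distinct* vertices. -/
def NoLoops (E : Fin N → Set (Sym2 V)) : Prop := ∀ e ∈ Eset E, ¬ e.IsDiag

/-- The underlying simple graph of the edge-coloured graph. -/
def graph (E : Fin N → Set (Sym2 V)) : SimpleGraph V where
  Adj u v := u ≠ v ∧ s(u, v) ∈ Eset E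
  symm := by
    constructor
    intro u v h
    refine ⟨h.1.symm, ?_⟩
    rw [Sym2.eq_swap]
    exact h.2
  loopless := ⟨fun v h => h.1 rfl⟩

/-- Local finiteness: every vertex lies in finitely many edges. -/
def LocFin (E : Fin N → Set (Sym2 V)) : Prop :=
  ∀ v : V, {e ∈ Eset E | v ∈ e}.Finite

/-- Connectivity of the edge-coloured graph. -/
def ConnectedGraph (E : Fin N → Set (Sym2 V)) : Prop := (graph E).Connected

/-- Quasi-transitivity: the vertices can be partitioned into finitely many classes
such that vertices in the same class are related by a coloured graph automorphism. -/
def QuasiTransitive (E : Fin N → Set (Sym2 V)) : Prop :=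
  ∃ (k : ℕ) (c : V → Fin k), ∀ u v : V, c u = c v →
    ∃ f : V ≃ V, (∀ (i : Fin N) (e : Sym2 V), e ∈ E i ↔ e.map f ∈ E i) ∧ f v = u

/-- Graph distance. -/
noncomputable def dist (E : Fin N → Set (Sym2 V)) (u v : V) : ℕ := (graph E).dist u v

/-- Percolation configurations: each (potential) edge is open (`true`) or closed. -/
abbrev Config (V : Type*) := Sym2 V → Bool

/-- `x` is joined to `y` by a path of open edges all of whose endpoints lie in `S`. -/
def ConnIn (E : Fin N → Set (Sym2 V)) (ω : Config V) (S : Set V) (x y : V) : Prop :=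
  Relation.ReflTransGen
    (fun a b => a ∈ S ∧ b ∈ S ∧ s(a, b) ∈ Eset E ∧ ω s(a, b) = true) x y

/-- The open cluster of `x`. -/
def cluster (E : Fin N → Set (Sym2 V)) (ω : Config V) (x : V) : Set V :=
  {y | ConnIn E ω Set.univ x y}

/-- The retention probability of an edge `e` under the parameter vector `r`:
`r i` for an edge of colour `i`, `0` for non-edges (by disjointness at most one
summand is nonzero). -/
noncomputable def edgeProb (E : Fin N → Set (Sym2 V)) (r : Fin N → ℝ) (e : Sym2 V) : ℝ :=
  ∑ i : Fin N, if e ∈ E i then r i else 0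

/-- `P` is the family of inhomogeneous percolation (product) measures: for each valid
parameter vector `r` it is a probability measure whose cylinder probabilities are the
products of the individual edge-retention probabilities. -/
def IsPercFamily (E : Fin N → Set (Sym2 V)) (P : (Fin N → ℝ) → Measure (Config V)) : Prop :=
  ∀ r : Fin N → ℝ, (∀ i, r i ∈ Icc (0 : ℝ) 1) →
    IsProbabilityMeasure (P r) ∧
    ∀ (F : Finset (Sym2 V)) (σ : Sym2 V → Bool),
      P r {ω | ∀ e ∈ F, ω e = σ e} =
        ∏ e ∈ F, ENNReal.ofReal (if σ e then edgeProb E r e else 1 - edgeProb E r e)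

/-- The full parameter vector `(p₁, …, p_{N-1}, q)`. -/
noncomputable def pFull (N : ℕ) (p : Fin (N - 1) → ℝ) (q : ℝ) : Fin N → ℝ :=
  fun i => if h : (i : ℕ) < N - 1 then p ⟨i, h⟩ else q

/-- The percolation function `θ`. -/
noncomputable def theta (E : Fin N → Set (Sym2 V)) (P : (Fin N → ℝ) → Measure (Config V))
    (r : Fin N → ℝ) : ℝ≥0∞ :=
  ⨆ x : V, P r {ω | (cluster E ω x).Infinite}

/-- The susceptibility `χ`. -/
noncomputable def chi (E : Fin N → Set (Sym2 V)) (P : (Fin N → ℝ) → Measure (Config V))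
    (r : Fin N → ℝ) : ℝ≥0∞ :=
  ⨆ x : V, ∫⁻ ω, ((cluster E ω x).encard : ℝ≥0∞) ∂(P r)

/-- The `θ`-critical surface. -/
noncomputable def qTheta (E : Fin N → Set (Sym2 V)) (P : (Fin N → ℝ) → Measure (Config V))
    (p : Fin (N - 1) → ℝ) : ℝ :=
  sInf (insert (1 : ℝ) {q | q ∈ Icc (0 : ℝ) 1 ∧ 0 < theta E P (pFull N p q)})

/-- The `χ`-critical surface. -/
noncomputable def qChi (E : Fin N → Set (Sym2 V)) (P : (Fin N → ℝ) → Measure (Config V))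
    (p : Fin (N - 1) → ℝ) : ℝ :=
  sInf (insert (1 : ℝ) {q | q ∈ Icc (0 : ℝ) 1 ∧ chi E P (pFull N p q) = ⊤})

/-- `ψ_{p,q}(x,S) = Σᵢ pᵢ Σ_{{y,z} ∈ ΔS ∩ Eᵢ} P(x ↔_S y)` (each boundary edge
is enumerated by its unique orientation `y ∈ S`, `z ∉ S`). -/
noncomputable def psi (E : Fin N → Set (Sym2 V)) (P : (Fin N → ℝ) → Measure (Config V))
    (r : Fin N → ℝ) (x : V) (S : Finset V) : ℝ≥0∞ :=
  ∑ i : Fin N, ENNReal.ofReal (r i) *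
    ∑ y ∈ S, ∑' z : V,
      (if z ∉ S ∧ s(y, z) ∈ E i then P r {ω | ConnIn E ω ↑S x y} else 0)

/-- The `ψ`-critical surface. -/
noncomputable def qPsi (E : Fin N → Set (Sym2 V)) (P : (Fin N → ℝ) → Measure (Config V))
    (p : Fin (N - 1) → ℝ) : ℝ :=
  sSup {q | q ∈ Icc (0 : ℝ) 1 ∧
    ∀ x : V, ∃ S : Finset V, x ∈ S ∧ psi E P (pFull N p q) x S < 1}

/-- The event that `x` is joined by an open path to `∂Λ_k^x` (the set of vertices
at graph distance exactly `k` from `x`). -/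
def ConnSphere (E : Fin N → Set (Sym2 V)) (ω : Config V) (x : V) (k : ℕ) : Prop :=
  ∃ y : V, dist E x y = k ∧ ConnIn E ω Set.univ x y

end InhomPerc

/-!
For `u ∈ A \ S`, split the event `x ↔_A u` according to the open cluster `C` of `x` inside `S`
and the last exit `{a, b}` of the path from `C` (`a ∈ C`, `b ∈ A \ S`), after which `b ↔ u`
inside `A \ C`. The events "the cluster is `C`", "`{a, b}` is open" and "`b ↔_{A \ C} u`" are
decided by disjoint finite sets of edges, hence independent. Summing over the clusters `C ∋ a`
gives `P(x ↔_S a)`, and summing over `u` bounds the last factor by `χ(A)`; the vertices `u ∈ S`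
contribute at most `|S|`.
-/

open ProbabilityTheory

section Independence

variable {ι β : Type*}

theorem iIndepFun_eval_of_measure_cylinder [MeasurableSpace β] {μ : Measure (ι → β)}
    [Countable β] [MeasurableSingletonClass β] [Nonempty β] [IsProbabilityMeasure μ]
    (hμ : ∀ (F : Finset ι) (σ : ι → β),
      μ {ω | ∀ i ∈ F, ω i = σ i} = ∏ i ∈ F, μ {ω | ω i = σ i}) :
    iIndepFun (fun i ω => ω i) μ := by
  refine iIndepFun_iff_finset.mpr fun s => ?_
  refine (iIndepFun_iff_map_fun_eq_pi_map
    fun i => (measurable_pi_apply _).aemeasurable).mpr ?_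
  refine Measure.ext_of_singleton fun τ => ?_
  set σ : ι → β := fun i => if h : i ∈ s then τ ⟨i, h⟩ else Classical.arbitrary β
  have hcyl : (fun (ω : ι → β) (i : s) => ω i) ⁻¹' {τ} = {ω | ∀ i ∈ s, ω i = σ i} := by
    ext ω; simp +contextual [σ, funext_iff]
  rw [Measure.pi_singleton,
    Measure.map_apply (measurable_pi_lambda _ fun i => measurable_pi_apply _)
      (measurableSet_singleton _), hcyl, hμ, ← Finset.prod_coe_sort]
  refine Finset.prod_congr rfl fun i _ => ?_
  rw [Measure.map_apply (measurable_pi_apply _) (measurableSet_singleton _)]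
  simp [σ, Set.preimage]

lemma dependsOn_mem_of_imp {A : Set (ι → β)} {s : Set ι}
    (h : ∀ ω ω', (∀ i ∈ s, ω i = ω' i) → ω ∈ A → ω' ∈ A) : DependsOn (· ∈ A) s :=
  fun ω ω' hω => propext ⟨h ω ω' hω, h ω' ω fun i hi => (hω i hi).symm⟩

lemma DependsOn.mem_inter {A B : Set (ι → β)} {s t : Set ι} (hA : DependsOn (· ∈ A) s)
    (hB : DependsOn (· ∈ B) t) : DependsOn (· ∈ A ∩ B) (s ∪ t) := fun _ _ h =>
  congrArg₂ (· ∧ ·) (hA fun i hi => h i (Or.inl hi)) (hB fun i hi => h i (Or.inr hi))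

lemma DependsOn.preimage_image_restrict {A : Set (ι → β)} {T : Finset ι}
    (hA : DependsOn (· ∈ A) T) : T.restrict ⁻¹' (T.restrict '' A) = A := by
  refine Subset.antisymm ?_ (subset_preimage_image _ _)
  rintro ω ⟨ω', hω', hrestrict⟩
  have h : (ω' ∈ A) = (ω ∈ A) := hA fun i hi => congrFun hrestrict ⟨i, hi⟩
  exact h ▸ hω'

variable [MeasurableSpace β] [Countable β] [MeasurableSingletonClass β]

lemma DependsOn.measurableSet {A : Set (ι → β)} {T : Finset ι} (hA : DependsOn (· ∈ A) T) :
    MeasurableSet A := by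
  rw [← hA.preimage_image_restrict]
  exact (Finset.measurable_restrict T) (Set.to_countable _).measurableSet

theorem ProbabilityTheory.iIndepFun.measure_inter_of_dependsOn {μ : Measure (ι → β)}
    (hμ : iIndepFun (fun i ω => ω i) μ) {S T : Finset ι} (hST : Disjoint S T)
    {A B : Set (ι → β)} (hA : DependsOn (· ∈ A) S) (hB : DependsOn (· ∈ B) T) :
    μ (A ∩ B) = μ A * μ B := by
  rw [← hA.preimage_image_restrict, ← hB.preimage_image_restrict]
  exact (hμ.indepFun_finset S T hST measurable_pi_apply).measure_inter_preimage_eq_mul _ _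
    (Set.to_countable _).measurableSet (Set.to_countable _).measurableSet

end Independence

namespace Relation

variable {α : Type*} {r r' : α → α → Prop} {x y : α}

theorem reflTransGen_iff_of_reachable (h : ∀ b c, ReflTransGen r x b → (r b c ↔ r' b c)) :
    ReflTransGen r x y ↔ ReflTransGen r' x y := by
  constructor
  · intro hxy
    induction hxy with
    | refl => exact .refl
    | tail hxb hbc ih => exact ih.tail ((h _ _ hxb).mp hbc)
  · intro hxy
    induction hxy with
    | refl => exact .refl
    | tail _ hbc ih => exact ih.tail ((h _ _ ih).mpr hbc)

theorem ReflTransGen.exists_exit {C : Set α} (hxy : ReflTransGen r x y) (hx : x ∈ C)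
    (hy : y ∉ C) :
    ∃ a ∈ C, ∃ b ∉ C, r a b ∧ ReflTransGen (fun c d => c ∉ C ∧ d ∉ C ∧ r c d) b y := by
  induction hxy with
  | refl => exact absurd hx hy
  | @tail b c _ hbc ih =>
    by_cases hb : b ∈ C
    · exact ⟨b, hb, c, hy, hbc, .refl⟩
    · obtain ⟨a, ha, b₀, hb₀, hab₀, hpath⟩ := ih hb
      exact ⟨a, ha, b₀, hb₀, hab₀, hpath.tail ⟨hb, hy, hbc⟩⟩

end Relation

namespace InhomPerc

variable {V : Type*} {N : ℕ} {E : Fin N → Set (Sym2 V)} {ω : Config V} {x y u : V}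

section Connectivity

lemma ConnIn.mono {S₁ S₂ : Set V} (h : S₁ ⊆ S₂) (hc : ConnIn E ω S₁ x y) : ConnIn E ω S₂ x y :=
  Relation.ReflTransGen.mono (fun _ _ hab => ⟨h hab.1, h hab.2.1, hab.2.2⟩) _ _ hc

lemma ConnIn.mem {S : Set V} (hx : x ∈ S) (hc : ConnIn E ω S x y) : y ∈ S := by
  induction hc with
  | refl => exact hx
  | tail _ hbc _ => exact hbc.2.1

lemma dependsOn_connIn (S : Finset V) (x y : V) :
    DependsOn (· ∈ {ω : Config V | ConnIn E ω ↑S x y}) ↑S.sym2 :=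
  dependsOn_mem_of_imp fun _ _ h => Relation.ReflTransGen.mono (fun a b hab =>
    ⟨hab.1, hab.2.1, hab.2.2.1, h s(a, b) (Finset.mk_mem_sym2_iff.2 ⟨hab.1, hab.2.1⟩) ▸ hab.2.2.2⟩)
      _ _

lemma dependsOn_isOpen (e : Sym2 V) :
    DependsOn (· ∈ {ω : Config V | ω e = true}) ↑({e} : Finset (Sym2 V)) :=
  dependsOn_mem_of_imp fun _ _ h hω => (h e (Finset.mem_singleton_self e)).symm.trans hω

noncomputable def clusterIn (E : Fin N → Set (Sym2 V)) (ω : Config V) (S : Finset V) (x : V) :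
    Finset V :=
  {y ∈ S | ConnIn E ω ↑S x y}

lemma mem_clusterIn {S : Finset V} (hx : x ∈ S) : y ∈ clusterIn E ω S x ↔ ConnIn E ω ↑S x y :=
  Finset.mem_filter.trans ⟨And.right, fun h => ⟨h.mem hx, h⟩⟩

lemma dependsOn_clusterIn_eq (S C : Finset V) (x : V) :
    DependsOn (· ∈ {ω : Config V | clusterIn E ω S x = C}) ↑{e ∈ S.sym2 | ∃ v ∈ e, v ∈ C} := by
  refine dependsOn_mem_of_imp fun ω ω' h hC => ?_
  refine Eq.trans (Finset.filter_congr fun y _ => ?_).symm hC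
  refine Relation.reflTransGen_iff_of_reachable fun b c hxb => ?_
  refine and_congr_right fun hb => and_congr_right fun hc => and_congr_right fun _ => ?_
  have hbC : b ∈ C := hC ▸ Finset.mem_filter.2 ⟨hb, hxb⟩
  rw [h s(b, c) (Finset.mem_filter.2
    ⟨Finset.mk_mem_sym2_iff.2 ⟨hb, hc⟩, b, Sym2.mem_mk_left b c, hbC⟩)]

lemma sum_measure_clusterIn_eq {μ : Measure (Config V)} {S : Finset V} {a : V} (ha : a ∈ S)
    (x : V) :
    ∑ C ∈ S.powerset with a ∈ C, μ {ω | clusterIn E ω S x = C} = μ {ω | ConnIn E ω ↑S x a} := by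
  rw [← measure_biUnion_finset (fun C _ C' _ hne => Set.disjoint_left.2 fun _ h h' =>
    hne (h.symm.trans h')) fun C _ => (dependsOn_clusterIn_eq S C x).measurableSet]
  congr 1
  ext ω
  simp only [mem_iUnion, mem_ofPred_eq, Finset.mem_filter, Finset.mem_powerset, exists_prop]
  constructor
  · rintro ⟨C, ⟨-, haC⟩, rfl⟩
    exact (Finset.mem_filter.1 haC).2
  · exact fun h => ⟨_, ⟨Finset.filter_subset _ _, Finset.mem_filter.2 ⟨ha, h⟩⟩, rfl⟩

lemma ConnIn.exists_exit {S A : Finset V} (hxS : x ∈ S) (h : ConnIn E ω ↑A x u) (hu : u ∉ S) :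
    ∃ a ∈ clusterIn E ω S x, ∃ b ∈ A \ S,
      ω s(a, b) = true ∧ ConnIn E ω ↑(A \ clusterIn E ω S x) b u := by
  have hCS : clusterIn E ω S x ⊆ S := Finset.filter_subset _ _
  obtain ⟨a, ha, b, hb, ⟨-, hbA, he, ho⟩, hpath⟩ :=
    Relation.ReflTransGen.exists_exit (C := ↑(clusterIn E ω S x)) h
      ((mem_clusterIn hxS).2 .refl) fun hu' => hu (hCS hu')
  have hbS : b ∉ S := fun hbS =>
    hb ((mem_clusterIn hxS).2 (((mem_clusterIn hxS).1 ha).tail ⟨hCS ha, hbS, he, ho⟩))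
  refine ⟨a, ha, b, Finset.mem_sdiff.2 ⟨hbA, hbS⟩, ho,
    Relation.ReflTransGen.mono (fun c d hcd => ?_) _ _ hpath⟩
  simp only [Finset.coe_sdiff, mem_sdiff]
  exact ⟨⟨hcd.2.2.1, hcd.1⟩, ⟨hcd.2.2.2.1, hcd.2.1⟩, hcd.2.2.2.2⟩

end Connectivity

section IndependentEdges

variable {μ : Measure (Config V)} (hμ : iIndepFun (fun e ω => ω e) μ)
include hμ

lemma measure_clusterIn_inter {S C B : Finset V} (hBC : Disjoint B C) {a b : V} (ha : a ∈ C)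
    (hb : b ∉ S) (x u : V) :
    μ ({ω | clusterIn E ω S x = C} ∩ ({ω | ω s(a, b) = true} ∩ {ω | ConnIn E ω ↑B b u})) =
      μ {ω | clusterIn E ω S x = C} *
        (μ {ω | ω s(a, b) = true} * μ {ω | ConnIn E ω ↑B b u}) := by
  have hedge : Disjoint {s(a, b)} B.sym2 := Finset.disjoint_singleton_left.2 fun h =>
    Finset.disjoint_right.1 hBC ha (Finset.mk_mem_sym2_iff.1 h).1
  have hcluster : Disjoint {e ∈ S.sym2 | ∃ v ∈ e, v ∈ C} ({s(a, b)} ∪ B.sym2) := by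
    refine Finset.disjoint_union_right.2 ⟨Finset.disjoint_singleton_right.2 fun h => ?_, ?_⟩
    · exact hb (Finset.mk_mem_sym2_iff.1 (Finset.mem_filter.1 h).1).2
    · refine Finset.disjoint_left.2 fun e he heB => ?_
      obtain ⟨v, hve, hvC⟩ := (Finset.mem_filter.1 he).2
      exact Finset.disjoint_right.1 hBC hvC (Finset.mem_sym2_iff.1 heB v hve)
  have hdep : DependsOn (· ∈ {ω : Config V | ω s(a, b) = true} ∩ {ω | ConnIn E ω ↑B b u})
      ↑({s(a, b)} ∪ B.sym2) := by
    rw [Finset.coe_union]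
    exact (dependsOn_isOpen _).mem_inter (dependsOn_connIn B b u)
  rw [hμ.measure_inter_of_dependsOn hcluster (dependsOn_clusterIn_eq S C x) hdep,
    hμ.measure_inter_of_dependsOn hedge (dependsOn_isOpen _) (dependsOn_connIn B b u)]

theorem measure_connIn_le {S A : Finset V} (hxS : x ∈ S) (huS : u ∉ S) :
    μ {ω | ConnIn E ω ↑A x u} ≤ ∑ a ∈ S, ∑ b ∈ A \ S,
      μ {ω | ConnIn E ω ↑S x a} * μ {ω | ω s(a, b) = true} * μ {ω | ConnIn E ω ↑A b u} := by
  have hcover : {ω | ConnIn E ω ↑A x u} ⊆ ⋃ a ∈ S, ⋃ b ∈ A \ S, ⋃ C ∈ S.powerset.filter (a ∈ ·),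
      {ω | clusterIn E ω S x = C} ∩ ({ω | ω s(a, b) = true} ∩ {ω | ConnIn E ω ↑(A \ C) b u}) := by
    intro ω h
    obtain ⟨a, ha, b, hb, ho, hpath⟩ := h.exists_exit hxS huS
    simp only [mem_iUnion]
    exact ⟨a, Finset.filter_subset _ _ ha, b, hb, _,
      Finset.mem_filter.2 ⟨Finset.mem_powerset.2 (Finset.filter_subset _ _), ha⟩, rfl, ho, hpath⟩
  calc μ {ω | ConnIn E ω ↑A x u}
      ≤ ∑ a ∈ S, ∑ b ∈ A \ S, ∑ C ∈ S.powerset with a ∈ C, μ ({ω | clusterIn E ω S x = C} ∩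
          ({ω | ω s(a, b) = true} ∩ {ω | ConnIn E ω ↑(A \ C) b u})) :=
        (measure_mono hcover).trans <| (measure_biUnion_finset_le _ _).trans <|
          Finset.sum_le_sum fun _ _ => (measure_biUnion_finset_le _ _).trans <|
            Finset.sum_le_sum fun _ _ => measure_biUnion_finset_le _ _
    _ ≤ ∑ a ∈ S, ∑ b ∈ A \ S, ∑ C ∈ S.powerset with a ∈ C,
          μ {ω | clusterIn E ω S x = C} * μ {ω | ω s(a, b) = true} * μ {ω | ConnIn E ω ↑A b u} := by
        gcongr with a _ b hb C hC
        rw [measure_clusterIn_inter hμ Finset.sdiff_disjoint (Finset.mem_filter.1 hC).2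
          (Finset.mem_sdiff.1 hb).2, ← mul_assoc]
        exact mul_le_mul_right (measure_mono fun ω h => ConnIn.mono Finset.sdiff_subset h) _
    _ = ∑ a ∈ S, ∑ b ∈ A \ S,
          μ {ω | ConnIn E ω ↑S x a} * μ {ω | ω s(a, b) = true} * μ {ω | ConnIn E ω ↑A b u} := by
        refine Finset.sum_congr rfl fun a ha => Finset.sum_congr rfl fun b _ => ?_
        rw [← Finset.sum_mul, ← Finset.sum_mul, sum_measure_clusterIn_eq ha]

theorem sum_measure_connIn_le {S : Finset V} (hxS : x ∈ S) (A : Finset V) :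
    ∑ u ∈ A, μ {ω | ConnIn E ω ↑A x u} ≤ S.card +
      (∑ a ∈ S, ∑ b ∈ A \ S, μ {ω | ConnIn E ω ↑S x a} * μ {ω | ω s(a, b) = true}) *
        ⨆ w, ∑ v ∈ A, μ {ω | ConnIn E ω ↑A w v} := by
  have := hμ.isProbabilityMeasure
  rw [← Finset.sum_filter_add_sum_filter_not A (· ∈ S)]
  gcongr
  · calc ∑ u ∈ A with u ∈ S, μ {ω | ConnIn E ω ↑A x u} ≤ (A.filter (· ∈ S)).card :=
          Finset.sum_le_card_nsmul _ _ 1 (fun _ _ => prob_le_one) |>.trans (by simp)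
      _ ≤ S.card := by exact_mod_cast Finset.card_le_card fun u hu => (Finset.mem_filter.1 hu).2
  · calc ∑ u ∈ A with u ∉ S, μ {ω | ConnIn E ω ↑A x u}
        ≤ ∑ u ∈ A with u ∉ S, ∑ a ∈ S, ∑ b ∈ A \ S,
            μ {ω | ConnIn E ω ↑S x a} * μ {ω | ω s(a, b) = true} * μ {ω | ConnIn E ω ↑A b u} :=
          Finset.sum_le_sum fun u hu => measure_connIn_le hμ hxS (Finset.mem_filter.1 hu).2
      _ = ∑ a ∈ S, ∑ b ∈ A \ S, μ {ω | ConnIn E ω ↑S x a} * μ {ω | ω s(a, b) = true} *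
            ∑ u ∈ A with u ∉ S, μ {ω | ConnIn E ω ↑A b u} := by
          simp only [Finset.mul_sum]
          rw [Finset.sum_comm]
          exact Finset.sum_congr rfl fun a _ => Finset.sum_comm
      _ ≤ ∑ a ∈ S, ∑ b ∈ A \ S, μ {ω | ConnIn E ω ↑S x a} * μ {ω | ω s(a, b) = true} *
            ⨆ w, ∑ v ∈ A, μ {ω | ConnIn E ω ↑A w v} := by
          gcongr with a _ b
          exact (Finset.sum_le_sum_of_subset (Finset.filter_subset _ _)).trans
            (le_iSup (fun w => ∑ v ∈ A, μ {ω | ConnIn E ω ↑A w v}) b)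
      _ = _ := by simp only [Finset.sum_mul]

end IndependentEdges

section PercolationMeasure

variable {P : (Fin N → ℝ) → Measure (Config V)} {r : Fin N → ℝ}

lemma pFull_mem_Icc {p : Fin (N - 1) → ℝ} (hp : ∀ i, p i ∈ Icc (0 : ℝ) 1) {q : ℝ}
    (hq : q ∈ Icc (0 : ℝ) 1) (i : Fin N) : pFull N p q i ∈ Icc (0 : ℝ) 1 := by
  unfold pFull
  split_ifs
  exacts [hp _, hq]

lemma IsPercFamily.measure_isOpen (hP : IsPercFamily E P) (hr : ∀ i, r i ∈ Icc (0 : ℝ) 1)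
    (e : Sym2 V) : P r {ω | ω e = true} = ENNReal.ofReal (edgeProb E r e) := by
  simpa using (hP r hr).2 {e} fun _ => true

lemma IsPercFamily.iIndepFun (hP : IsPercFamily E P) (hr : ∀ i, r i ∈ Icc (0 : ℝ) 1) :
    iIndepFun (fun e ω => ω e) (P r) := by
  have := (hP r hr).1
  refine iIndepFun_eval_of_measure_cylinder fun F σ => ?_
  rw [(hP r hr).2 F σ]
  refine Finset.prod_congr rfl fun e _ => ?_
  simpa using ((hP r hr).2 {e} σ).symm

lemma ofReal_edgeProb (hr : ∀ i, 0 ≤ r i) (e : Sym2 V) :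
    ENNReal.ofReal (edgeProb E r e) = ∑ i, if e ∈ E i then ENNReal.ofReal (r i) else 0 := by
  rw [edgeProb, ENNReal.ofReal_sum_of_nonneg fun i _ => by split_ifs; exacts [hr i, le_rfl]]
  exact Finset.sum_congr rfl fun i _ => by split_ifs <;> simp

lemma sum_boundary_le_psi (hr : ∀ i, 0 ≤ r i) (x : V) (S A : Finset V) :
    ∑ a ∈ S, ∑ b ∈ A \ S, P r {ω | ConnIn E ω ↑S x a} * ENNReal.ofReal (edgeProb E r s(a, b)) ≤
      psi E P r x S := by
  calc _ = ∑ i, ENNReal.ofReal (r i) * ∑ a ∈ S, ∑ b ∈ A \ S,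
        (if b ∉ S ∧ s(a, b) ∈ E i then P r {ω | ConnIn E ω ↑S x a} else 0) := by
        simp only [ofReal_edgeProb hr, Finset.mul_sum]
        refine (Finset.sum_congr rfl fun a _ => Finset.sum_comm).trans (Finset.sum_comm.trans ?_)
        refine Finset.sum_congr rfl fun i _ => Finset.sum_congr rfl fun a _ =>
          Finset.sum_congr rfl fun b hb => ?_
        simp only [(Finset.mem_sdiff.1 hb).2, not_false_eq_true, true_and]
        split_ifs <;> simp [mul_comm]
    _ ≤ psi E P r x S := by
        unfold psi
        gcongr
        exact ENNReal.sum_le_tsum _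

end PercolationMeasure

theorem restricted_sum_bound_general
    {V : Type*} {N : ℕ}
    (E : Fin N → Set (Sym2 V))
    (P : (Fin N → ℝ) → Measure (Config V)) (hP : IsPercFamily E P)
    (p : Fin (N - 1) → ℝ) (hp : ∀ i, p i ∈ Icc (0 : ℝ) 1)
    (q : ℝ) (hq : q ∈ Icc (0 : ℝ) 1)
    (x : V) (S : Finset V) (hxS : x ∈ S) (A : Finset V) :
    ∑ u ∈ A, P (pFull N p q) {ω | ConnIn E ω ↑A x u} ≤
      (S.card : ℝ≥0∞) +
        psi E P (pFull N p q) x S *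
          ⨆ w : V, ∑ v ∈ A, P (pFull N p q) {ω | ConnIn E ω ↑A w v} := by
  have hr := pFull_mem_Icc hp hq
  refine (sum_measure_connIn_le (hP.iIndepFun hr) hxS A).trans ?_
  simp only [hP.measure_isOpen hr]
  gcongr
  exact sum_boundary_le_psi (fun i => (hr i).1) x S A

/-- `Σ_{u∈A} P(x ↔_A u) ≤ |S| + ψ(x,S) · χ(A)` where
`χ(A) = sup_w Σ_{v∈A} P(w ↔_A v)`. -/
theorem restricted_sum_bound
    {V : Type*} [Countable V] [Infinite V] {N : ℕ} (hN : 0 < N)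
    (E : Fin N → Set (Sym2 V))
    (hdisj : DisjointColours E) (hloops : NoLoops E)
    (hlf : LocFin E) (hconn : ConnectedGraph E)
    (P : (Fin N → ℝ) → Measure (Config V)) (hP : IsPercFamily E P)
    (p : Fin (N - 1) → ℝ) (hp : ∀ i, p i ∈ Icc (0 : ℝ) 1)
    (q : ℝ) (hq : q ∈ Icc (0 : ℝ) 1)
    (x : V) (S : Finset V) (hxS : x ∈ S) (A : Finset V) :
    ∑ u ∈ A, P (pFull N p q) {ω | ConnIn E ω ↑A x u} ≤
      (S.card : ℝ≥0∞) +
        psi E P (pFull N p q) x S *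
          ⨆ w : V, ∑ v ∈ A, P (pFull N p q) {ω | ConnIn E ω ↑A w v} :=
  restricted_sum_bound_general E P hP p hp q hq x S hxS A

end InhomPerc
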